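/- Let A ∈ ℂ^{n×n}, B ∈ ℂ^{n×m}, C ∈ ℂ^{p×n}, with (A,B) controllable and (A,C) observable, and let α = α(A) be the largest geometric multiplicity of an eigenvalue of A. Then there exist full rank matrices T_b ∈ ℂ^{m×α} and T_c ∈ ℂ^{α×p} such that (A, B T_b) is controllable and (A, T_c C) is observable. -/

import Mathlib

open Matrix

/-- PBH controllability: `rank [λI − A, B] = n` for all `λ ∈ ℂ`. -/
def Controllable {n m : Type*} [Fintype n] [Fintype m] [DecidableEq n]
    (A : Matrix n n ℂ) (B : Matrix n m ℂ) : Prop :=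
  ∀ lam : ℂ, (Matrix.fromCols (lam • (1 : Matrix n n ℂ) - A) B).rank = Fintype.card n

/-- PBH observability: `rank [λI − A; C] = n` for all `λ ∈ ℂ`. -/
def Observable {n p : Type*} [Fintype n] [Fintype p] [DecidableEq n]
    (A : Matrix n n ℂ) (C : Matrix p n ℂ) : Prop :=
  ∀ lam : ℂ, (Matrix.fromRows (lam • (1 : Matrix n n ℂ) - A) C).rank = Fintype.card n

/-! For a single eigenvalue `μ`, the range of `μ • 1 - A` has codimension at most `α`, so `α`
columns of `B`, suitably combined, already complete it to the whole space. Whether a given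
`T` works for `μ` is the non-vanishing of a polynomial in the entries of `T` (a determinant
made square by a right inverse), nonzero because some `T` works. The product of these
polynomials over the finitely many eigenvalues is nonzero, hence has a non-root over `ℂ`,
which gives one `T` for all eigenvalues at once; away from the spectrum the PBH test holds for
any `T`. The rank of `T` is then forced to be `α` at an eigenvalue of geometric
multiplicity `α`, and observability is the transposed statement. -/

open Module Submodule

theorem Submodule.exists_fin_sup_span_eq_top {K E : Type*} [Field K] [AddCommGroup E]
    [Module K E] [FiniteDimensional K E] {V W : Submodule K E} (hVW : V ⊔ W = ⊤) {α : ℕ}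
    (hα : finrank K E ≤ finrank K V + α) :
    ∃ f : Fin α → E, (∀ i, f i ∈ W) ∧ V ⊔ span K (Set.range f) = ⊤ := by
  induction α generalizing V with
  | zero =>
    exact ⟨Fin.elim0, fun i => i.elim0, by
      simp [eq_top_of_finrank_eq (le_antisymm V.finrank_le hα)]⟩
  | succ α ih =>
    by_cases hV : V = ⊤
    · exact ⟨0, fun _ => W.zero_mem, by simp [hV]⟩
    obtain ⟨w, hwW, hwV⟩ : ∃ w ∈ W, w ∉ V :=
      SetLike.not_le_iff_exists.mp fun hWV => hV (by rwa [sup_eq_left.mpr hWV] at hVW)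
    have hlt : V < V ⊔ span K {w} :=
      lt_of_le_of_ne le_sup_left fun h => hwV (h ▸ mem_sup_right (mem_span_singleton_self w))
    have hsup : V ⊔ span K {w} ⊔ W = ⊤ := by
      rwa [sup_assoc, sup_eq_right.mpr ((span_singleton_le_iff_mem w W).mpr hwW)]
    obtain ⟨f, hfW, hf⟩ := ih hsup (by linarith [finrank_lt_finrank_of_lt hlt])
    refine ⟨Fin.cons w f, Fin.cases hwW hfW, ?_⟩
    rwa [Fin.range_cons, span_insert, ← sup_assoc]

theorem MvPolynomial.exists_forall_eval_ne_zero {R σ ι : Type*} [CommRing R] [IsDomain R]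
    [Infinite R] (S : Finset ι) (p : ι → MvPolynomial σ R) (hp : ∀ i ∈ S, p i ≠ 0) :
    ∃ x : σ → R, ∀ i ∈ S, eval x (p i) ≠ 0 := by
  obtain ⟨x, hx⟩ : ∃ x, eval x (∏ i ∈ S, p i) ≠ 0 := by
    by_contra! h
    exact Finset.prod_ne_zero_iff.mpr hp (funext fun x => by simpa using h x)
  exact ⟨x, fun i hi h0 => hx (by rw [map_prod]; exact Finset.prod_eq_zero hi h0)⟩

namespace Matrix

variable {K : Type*} [Field K] {ι k l κ : Type*} [Fintype k] [Fintype l] [Fintype κ]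

theorem range_mulVecLin_fromCols (M : Matrix ι k K) (N : Matrix ι l K) :
    LinearMap.range (fromCols M N).mulVecLin =
      LinearMap.range M.mulVecLin ⊔ LinearMap.range N.mulVecLin := by
  have hcol : (fromCols M N).col = Sum.elim M.col N.col := by
    ext (j | j) i <;> rfl
  rw [range_mulVecLin, range_mulVecLin, range_mulVecLin, hcol, Set.Sum.elim_range, span_union]

theorem rank_fromCols_le (M : Matrix ι k K) (N : Matrix ι l K) :
    (fromCols M N).rank ≤ M.rank + N.rank := by
  rw [rank, range_mulVecLin_fromCols]
  exact finrank_add_le_finrank_add_finrank _ _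

theorem rank_le_rank_fromCols [DecidableEq k] (M : Matrix ι k K) (N : Matrix ι l K) :
    M.rank ≤ (fromCols M N).rank := by
  simpa [fromCols_mul_fromRows] using
    (fromCols M N).rank_mul_le_left (fromRows (1 : Matrix k k K) (0 : Matrix l k K))

theorem transpose_smul_one_sub [DecidableEq ι] (A : Matrix ι ι K) (μ : K) :
    (μ • 1 - A)ᵀ = μ • 1 - Aᵀ := by
  rw [transpose_sub, transpose_smul, transpose_one]

variable [Fintype ι]

theorem rank_eq_card_iff_range_eq_top (M : Matrix ι k K) :
    M.rank = Fintype.card ι ↔ LinearMap.range M.mulVecLin = ⊤ := by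
  rw [rank, ← finrank_fintype_fun_eq_card K]
  exact ⟨eq_top_of_finrank_eq, fun h => by rw [h, finrank_top]⟩

theorem exists_mul_eq_one_of_rank_eq_card [DecidableEq ι] (M : Matrix ι k K)
    (h : M.rank = Fintype.card ι) : ∃ J : Matrix k ι K, M * J = 1 := by
  classical
  obtain ⟨g, hg⟩ := M.mulVecLin.exists_rightInverse_of_surjective
    ((rank_eq_card_iff_range_eq_top M).mp h)
  refine ⟨LinearMap.toMatrix' g, toLin'.injective ?_⟩
  rw [toLin'_mul, toLin'_toMatrix', toLin'_one, toLin'_apply', hg]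

theorem rank_smul_one_sub_of_notMem_spectrum [DecidableEq ι] {A : Matrix ι ι K} {μ : K}
    (hμ : μ ∉ spectrum K A) : (μ • 1 - A).rank = Fintype.card ι :=
  rank_of_isUnit _ (by rwa [spectrum.notMem_iff, Algebra.algebraMap_eq_smul_one] at hμ)

theorem rank_smul_one_sub_transpose [DecidableEq ι] (A : Matrix ι ι K) (μ : K) :
    (μ • 1 - Aᵀ).rank = (μ • 1 - A).rank := by
  rw [← transpose_smul_one_sub, rank_transpose]

theorem spectrum_transpose [DecidableEq ι] (A : Matrix ι ι K) : spectrum K Aᵀ = spectrum K A := by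
  ext μ
  rw [spectrum.mem_iff, spectrum.mem_iff, Algebra.algebraMap_eq_smul_one, ← transpose_smul_one_sub,
    isUnit_transpose]

theorem exists_rank_fromCols_mul_eq_card (L : Matrix ι k K) (B : Matrix ι κ K)
    (h : (fromCols L B).rank = Fintype.card ι) {α : ℕ} (hα : Fintype.card ι ≤ L.rank + α) :
    ∃ T : Matrix κ (Fin α) K, (fromCols L (B * T)).rank = Fintype.card ι := by
  rw [rank_eq_card_iff_range_eq_top, range_mulVecLin_fromCols] at h
  obtain ⟨f, hfB, hf⟩ := exists_fin_sup_span_eq_top h (by rwa [finrank_fintype_fun_eq_card])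
  choose u hu using hfB
  refine ⟨(of u)ᵀ, ?_⟩
  have hcol : (B * (of u)ᵀ).col = f := by
    ext i r
    simp [← hu i, mul_apply, mulVec, dotProduct]
  rwa [rank_eq_card_iff_range_eq_top, range_mulVecLin_fromCols, range_mulVecLin (B * _), hcol]

theorem exists_forall_det_fromCols_mul_mul_ne_zero [Infinite K] [DecidableEq ι] {σ a : Type*}
    [Fintype a] (S : Finset σ) (L : σ → Matrix ι k K) (B : Matrix ι κ K)
    (J : σ → Matrix (k ⊕ a) ι K)
    (h : ∀ s ∈ S, ∃ T : Matrix κ a K, det (fromCols (L s) (B * T) * J s) ≠ 0) :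
    ∃ T : Matrix κ a K, ∀ s ∈ S, det (fromCols (L s) (B * T) * J s) ≠ 0 := by
  -- naming `c` with its type fixes the matrix multiplication instances in `p`
  let c : K →+* MvPolynomial (κ × a) K := MvPolynomial.C
  let p : σ → MvPolynomial (κ × a) K := fun s =>
    det (fromCols ((L s).map c) (B.map c * mvPolynomialX κ a K) * (J s).map c)
  have hp : ∀ s (T : Matrix κ a K),
      MvPolynomial.eval (fun x => T x.1 x.2) (p s) = det (fromCols (L s) (B * T) * J s) := by
    intro s T
    have hX : (mvPolynomialX κ a K).map (MvPolynomial.eval fun x => T x.1 x.2) = T :=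
      mvPolynomialX_map_eval₂ _ T
    rw [RingHom.map_det, RingHom.mapMatrix_apply, Matrix.map_mul, fromCols_map, Matrix.map_mul, hX]
    simp [c, Function.comp_def]
  obtain ⟨t, ht⟩ := MvPolynomial.exists_forall_eval_ne_zero S p fun s hs hp0 => by
    obtain ⟨T, hT⟩ := h s hs
    exact hT (by rw [← hp, hp0, map_zero])
  exact ⟨of fun j i => t (j, i), fun s hs => by simpa [← hp] using ht s hs⟩

theorem exists_forall_rank_fromCols_mul_eq_card [Infinite K] {σ a : Type*} [Fintype a]
    (S : Finset σ) (L : σ → Matrix ι k K) (B : Matrix ι κ K)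
    (h : ∀ s ∈ S, ∃ T : Matrix κ a K, (fromCols (L s) (B * T)).rank = Fintype.card ι) :
    ∃ T : Matrix κ a K, ∀ s ∈ S, (fromCols (L s) (B * T)).rank = Fintype.card ι := by
  classical
  choose! T₀ hT₀ using h
  choose! J hJ using fun s hs => exists_mul_eq_one_of_rank_eq_card _ (hT₀ s hs)
  obtain ⟨T, hT⟩ := exists_forall_det_fromCols_mul_mul_ne_zero S L B J fun s hs =>
    ⟨T₀ s, by simp [hJ s hs]⟩
  refine ⟨T, fun s hs => le_antisymm (rank_le_card_height _) ?_⟩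
  calc Fintype.card ι = (fromCols (L s) (B * T) * J s).rank :=
        (rank_of_det_ne_zero (hT s hs)).symm
    _ ≤ _ := rank_mul_le_left _ _

end Matrix

section ControlTheory

open Matrix

variable {ι κ π : Type*} [Fintype ι] [Fintype κ] [Fintype π] [DecidableEq ι] {A : Matrix ι ι ℂ}

theorem Controllable.card_sub_rank_le_rank {B : Matrix ι κ ℂ} (hc : Controllable A B) (μ : ℂ) :
    Fintype.card ι - (μ • 1 - A).rank ≤ B.rank := by
  have := hc μ ▸ rank_fromCols_le (μ • 1 - A) B
  omega

theorem Controllable.exists_controllable_mul {B : Matrix ι κ ℂ} (hc : Controllable A B) {α : ℕ}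
    (hub : ∀ μ ∈ spectrum ℂ A, Fintype.card ι - (μ • 1 - A).rank ≤ α) :
    ∃ T : Matrix κ (Fin α) ℂ, Controllable A (B * T) := by
  obtain ⟨T, hT⟩ := exists_forall_rank_fromCols_mul_eq_card (finite_spectrum A).toFinset
    (fun μ => μ • 1 - A) B fun μ hμ => by
      refine exists_rank_fromCols_mul_eq_card (α := α) _ B (hc μ) ?_
      have := hub μ (by simpa using hμ)
      omega
  refine ⟨T, fun μ => ?_⟩
  by_cases hμ : μ ∈ spectrum ℂ A
  · exact hT μ (by simpa using hμ)
  · exact le_antisymm (rank_le_card_height _)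
      (rank_smul_one_sub_of_notMem_spectrum hμ ▸ rank_le_rank_fromCols _ _)

theorem Controllable.exists_rank_eq_controllable_mul {B : Matrix ι κ ℂ} (hc : Controllable A B)
    {α : ℕ} (hub : ∀ μ ∈ spectrum ℂ A, Fintype.card ι - (μ • 1 - A).rank ≤ α)
    (hmax : ∃ μ : ℂ, Fintype.card ι - (μ • 1 - A).rank = α) :
    ∃ T : Matrix κ (Fin α) ℂ, T.rank = α ∧ Controllable A (B * T) := by
  obtain ⟨T, hT⟩ := hc.exists_controllable_mul hub
  obtain ⟨μ, hμ⟩ := hmax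
  refine ⟨T, le_antisymm (T.rank_le_card_width.trans_eq (Fintype.card_fin α)) ?_, hT⟩
  calc α = Fintype.card ι - (μ • 1 - A).rank := hμ.symm
    _ ≤ (B * T).rank := hT.card_sub_rank_le_rank μ
    _ ≤ T.rank := rank_mul_le_right B T

theorem observable_iff_controllable_transpose {C : Matrix π ι ℂ} :
    Observable A C ↔ Controllable Aᵀ Cᵀ := by
  refine forall_congr' fun μ => ?_
  rw [← rank_transpose, transpose_fromRows, transpose_smul_one_sub]

theorem Observable.exists_rank_eq_observable_mul {C : Matrix π ι ℂ} (ho : Observable A C)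
    {α : ℕ} (hub : ∀ μ ∈ spectrum ℂ A, Fintype.card ι - (μ • 1 - A).rank ≤ α)
    (hmax : ∃ μ : ℂ, Fintype.card ι - (μ • 1 - A).rank = α) :
    ∃ T : Matrix (Fin α) π ℂ, T.rank = α ∧ Observable A (T * C) := by
  obtain ⟨T, hT, hTc⟩ :=
    (observable_iff_controllable_transpose.mp ho).exists_rank_eq_controllable_mul
      (by simpa only [spectrum_transpose, rank_smul_one_sub_transpose] using hub)
      (by simpa only [rank_smul_one_sub_transpose] using hmax)
  refine ⟨Tᵀ, by rwa [rank_transpose], ?_⟩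
  rwa [observable_iff_controllable_transpose, transpose_mul, transpose_transpose]

end ControlTheory

theorem exists_full_rank_compressions (n m p : ℕ)
    (A : Matrix (Fin n) (Fin n) ℂ) (B : Matrix (Fin n) (Fin m) ℂ)
    (C : Matrix (Fin p) (Fin n) ℂ) (α : ℕ)
    (hub : ∀ μ ∈ spectrum ℂ A, n - (μ • (1 : Matrix (Fin n) (Fin n) ℂ) - A).rank ≤ α)
    (hmax : ∃ μ ∈ spectrum ℂ A, n - (μ • (1 : Matrix (Fin n) (Fin n) ℂ) - A).rank = α)
    (hc : Controllable A B) (ho : Observable A C) :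
    ∃ (Tb : Matrix (Fin m) (Fin α) ℂ) (Tc : Matrix (Fin α) (Fin p) ℂ),
      Tb.rank = α ∧ Tc.rank = α ∧ Controllable A (B * Tb) ∧ Observable A (Tc * C) := by
  have hub' : ∀ μ ∈ spectrum ℂ A, Fintype.card (Fin n) - (μ • 1 - A).rank ≤ α := by
    simpa only [Fintype.card_fin] using hub
  obtain ⟨μ, -, hμ⟩ := hmax
  have hmax' : ∃ μ : ℂ, Fintype.card (Fin n) - (μ • 1 - A).rank = α :=
    ⟨μ, by simpa only [Fintype.card_fin] using hμ⟩
  obtain ⟨Tb, hTb, hcb⟩ := hc.exists_rank_eq_controllable_mul hub' hmax'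
  obtain ⟨Tc, hTc, hoc⟩ := ho.exists_rank_eq_observable_mul hub' hmax'
  exact ⟨Tb, Tc, hTb, hTc, hcb, hoc⟩
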